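/- Let R = k[x,y,z]/(z^2 - xy) over a field k of characteristic 0. Then the module of Kähler differentials Ω^1_{R/k} is a torsion-free R-module. -/

import Mathlib

/-!
The parametrization `x = s², y = t², z = st` identifies `R` with the subring of `k[s,t]` spanned
by the monomials of even degree. Composing with `∂/∂s` and `∂/∂t` gives two `R`-linear maps
`Ω[R⁄k] → k[s,t]`, and since `k[s,t]` is a domain both of them kill every torsion element.
For an element `a dx + b dy + c dz` killed by both, the images of `a, b, c` in `k[s,t]` satisfy
`2sa + tc = 0` and `2tb + sc = 0`, which forces them to be `u • (t², s², -2st)`. Then `u` has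
even degree, so it is the image of some `w ∈ R`, and the element is `w • d(xy - z²) = 0`.
-/

open MvPolynomial KaehlerDifferential

namespace MvPolynomial

section EvenDegree

variable (σ R : Type*) [CommSemiring R]

def evenDegreeSubalgebra : Subalgebra R (MvPolynomial σ R) where
  carrier := {p | ∀ m ∈ p.support, Even m.degree}
  mul_mem' {p q} hp hq m hm := by
    classical
    obtain ⟨m₁, hm₁, m₂, hm₂, rfl⟩ := Finset.mem_add.mp (support_mul p q hm)
    rw [map_add]
    exact (hp m₁ hm₁).add (hq m₂ hm₂)
  add_mem' {p q} hp hq m hm := by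
    classical
    rcases Finset.mem_union.mp (support_add hm) with h | h
    exacts [hp m h, hq m h]
  algebraMap_mem' a m hm := by
    classical
    rw [algebraMap_eq, support_C] at hm
    split_ifs at hm
    · simp at hm
    · simp [Finset.mem_singleton.mp hm]

variable {σ R}

theorem X_mul_X_mem_evenDegreeSubalgebra (i j : σ) :
    X i * X j ∈ evenDegreeSubalgebra σ R := by
  classical
  intro m hm
  rw [X, X, monomial_mul] at hm
  rw [Finset.mem_singleton.mp (support_monomial_subset hm)]
  simp

theorem mem_evenDegreeSubalgebra_of_X_pow_two_mul_mem {i : σ} {p : MvPolynomial σ R}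
    (h : X i ^ 2 * p ∈ evenDegreeSubalgebra σ R) : p ∈ evenDegreeSubalgebra σ R := by
  intro m hm
  have hcoeff : coeff (Finsupp.single i 2 + m) (X i ^ 2 * p) = coeff m p := by
    rw [X_pow_eq_monomial, coeff_monomial_mul, one_mul]
  have := h _ (by rwa [mem_support_iff, hcoeff, ← mem_support_iff])
  rw [map_add, Finsupp.degree_single] at this
  exact (Nat.even_add.mp this).mp even_two

end EvenDegree

theorem monomial_eq_C_mul_X_pow_mul_X_pow {R : Type*} [CommSemiring R] (m : Fin 2 →₀ ℕ)
    (c : R) : monomial m c = C c * X 0 ^ m 0 * X 1 ^ m 1 := by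
  rw [monomial_eq, Finsupp.prod_fintype _ _ (by simp), Fin.prod_univ_two, mul_assoc]

theorem monomial_eq_C_mul_X_pow_mul_X_pow_mul_X_pow {R : Type*} [CommSemiring R]
    (m : Fin 3 →₀ ℕ) (c : R) : monomial m c = C c * X 0 ^ m 0 * X 1 ^ m 1 * X 2 ^ m 2 := by
  rw [monomial_eq, Finsupp.prod_fintype _ _ (by simp), Fin.prod_univ_three]
  ring

theorem exists_eq_X_pow_two_mul_of_mul_X_add_mul_X_eq_zero {k : Type*} [Field k] [NeZero (2 : k)]
    {a b c : MvPolynomial (Fin 2) k} (h₀ : a * (2 * X 0) + c * X 1 = 0)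
    (h₁ : b * (2 * X 1) + c * X 0 = 0) :
    ∃ u, a = X 1 ^ 2 * u ∧ b = X 0 ^ 2 * u ∧ c = -(2 * (X 0 * X 1) * u) := by
  have hX : Prime (X 1 : MvPolynomial (Fin 2) k) := X_prime
  have hX0 : ¬ X 1 ∣ (X 0 : MvPolynomial (Fin 2) k) := by rw [X_dvd_X]; decide
  have h2 : IsUnit (2 : MvPolynomial (Fin 2) k) := by
    have := (IsUnit.mk0 (2 : k) two_ne_zero).map (C : k →+* MvPolynomial (Fin 2) k)
    rwa [map_ofNat] at this
  obtain ⟨α, rfl⟩ : X 1 ∣ a := by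
    have : X 1 ∣ 2 * X 0 * a := ⟨-c, by linear_combination h₀⟩
    refine (hX.dvd_or_dvd this).resolve_left fun h => ?_
    exact (hX.dvd_or_dvd h).elim (fun h => hX.not_isUnit (isUnit_of_dvd_unit h h2)) hX0
  have hc : c = -(2 * X 0 * α) :=
    mul_left_cancel₀ (X_ne_zero 1) (by linear_combination h₀)
  have hb : X 1 * b = X 0 ^ 2 * α :=
    mul_left_cancel₀ h2.ne_zero (by linear_combination h₁ - X 0 * hc)
  obtain ⟨u, rfl⟩ : X 1 ∣ α :=
    (hX.dvd_or_dvd ⟨b, hb.symm⟩).resolve_left fun h => hX0 (hX.dvd_of_dvd_pow h)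
  refine ⟨u, by ring, mul_left_cancel₀ (X_ne_zero 1) (by linear_combination hb), ?_⟩
  rw [hc]
  ring

end MvPolynomial

theorem KaehlerDifferential.span_range_D_X_eq_top_of_surjective {σ R S : Type*} [CommRing R]
    [CommRing S] [Algebra R S] (f : MvPolynomial σ R →ₐ[R] S) (hf : Function.Surjective f) :
    Submodule.span S (Set.range fun i => D R S (f (X i))) = ⊤ := by
  rw [eq_top_iff, ← span_range_derivation, Submodule.span_le]
  rintro _ ⟨s, rfl⟩
  obtain ⟨p, rfl⟩ := hf s
  induction p using MvPolynomial.induction_on with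
  | C a => simp
  | add p q hp hq => rw [map_add, map_add]; exact add_mem hp hq
  | mul_X p i hp =>
    rw [map_mul, Derivation.leibniz]
    exact add_mem (Submodule.smul_mem _ _ (Submodule.subset_span ⟨i, rfl⟩))
      (Submodule.smul_mem _ _ hp)

noncomputable section Conic

variable (k : Type*) [CommRing k]

abbrev conicIdeal : Ideal (MvPolynomial (Fin 3) k) :=
  Ideal.span {X 2 ^ 2 - X 0 * X 1}

abbrev ConicRing : Type _ :=
  MvPolynomial (Fin 3) k ⧸ conicIdeal k

def conicParam : MvPolynomial (Fin 3) k →ₐ[k] MvPolynomial (Fin 2) k :=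
  aeval ![X 0 ^ 2, X 1 ^ 2, X 0 * X 1]

/-- Sends an even-degree monomial `s ^ i * t ^ j` to its preimage under `conicParam` that uses `z`
at most once; its values on odd-degree monomials are junk. -/
def conicParamInv : MvPolynomial (Fin 2) k →ₗ[k] MvPolynomial (Fin 3) k :=
  (basisMonomials (Fin 2) k).constr k fun m => X 0 ^ (m 0 / 2) * X 1 ^ (m 1 / 2) * X 2 ^ (m 0 % 2)

variable {k}

local notation "mk" => Ideal.Quotient.mk (conicIdeal k)

@[simp]
theorem conicParam_X (i : Fin 3) : conicParam k (X i) = ![X 0 ^ 2, X 1 ^ 2, X 0 * X 1] i :=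
  aeval_X _ i

theorem conicParam_mem_evenDegreeSubalgebra (p : MvPolynomial (Fin 3) k) :
    conicParam k p ∈ evenDegreeSubalgebra (Fin 2) k := by
  have hp : conicParam k p ∈ (conicParam k).range := ⟨p, rfl⟩
  rw [conicParam, aeval_range] at hp
  refine Algebra.adjoin_le ?_ hp
  rintro _ ⟨i, rfl⟩
  fin_cases i
  · simpa [pow_two] using X_mul_X_mem_evenDegreeSubalgebra (R := k) 0 0
  · simpa [pow_two] using X_mul_X_mem_evenDegreeSubalgebra (R := k) 1 1
  · simpa using X_mul_X_mem_evenDegreeSubalgebra (R := k) 0 1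

theorem conicParamInv_monomial (m : Fin 2 →₀ ℕ) (c : k) :
    conicParamInv k (monomial m c) =
      C c * (X 0 ^ (m 0 / 2) * X 1 ^ (m 1 / 2) * X 2 ^ (m 0 % 2)) := by
  rw [show monomial m c = c • basisMonomials (Fin 2) k m by
      rw [coe_basisMonomials, smul_monomial, smul_eq_mul, mul_one],
    map_smul, conicParamInv, Module.Basis.constr_basis, smul_eq_C_mul]

theorem conicParamInv_C_mul_X_pow_mul_X_pow (c : k) (i j : ℕ) :
    conicParamInv k (C c * X 0 ^ i * X 1 ^ j) =
      C c * (X 0 ^ (i / 2) * X 1 ^ (j / 2) * X 2 ^ (i % 2)) := by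
  have h := conicParamInv_monomial (Finsupp.single 0 i + Finsupp.single 1 j) c
  rw [monomial_eq_C_mul_X_pow_mul_X_pow] at h
  simpa using h

theorem conicParam_conicParamInv_monomial {m : Fin 2 →₀ ℕ} (hm : Even m.degree) (c : k) :
    conicParam k (conicParamInv k (monomial m c)) = monomial m c := by
  rw [conicParamInv_monomial, monomial_eq_C_mul_X_pow_mul_X_pow]
  rw [Finsupp.degree_eq_sum, Fin.sum_univ_two] at hm
  obtain ⟨n, hn⟩ := hm
  have h₀ : m 0 = 2 * (m 0 / 2) + m 0 % 2 := (Nat.div_add_mod _ _).symm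
  have h₁ : m 1 = 2 * (m 1 / 2) + m 0 % 2 := by omega
  conv_rhs => rw [h₀, h₁]
  simp only [map_mul, map_pow, algHom_C, algebraMap_eq, conicParam_X, Matrix.cons_val_zero,
    Matrix.cons_val_one, Matrix.cons_val]
  ring

theorem conicParam_conicParamInv {p : MvPolynomial (Fin 2) k}
    (hp : p ∈ evenDegreeSubalgebra (Fin 2) k) : conicParam k (conicParamInv k p) = p := by
  conv_lhs => rw [p.as_sum, map_sum, map_sum]
  conv_rhs => rw [p.as_sum]
  exact Finset.sum_congr rfl fun m hm => conicParam_conicParamInv_monomial (hp m hm) _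

theorem mk_X_two_pow_two : mk (X 2) ^ 2 = mk (X 0) * mk (X 1) := by
  rw [← map_pow, ← map_mul, Ideal.Quotient.mk_eq_mk_iff_sub_mem]
  exact Ideal.subset_span rfl

theorem mk_X_two_pow (n : ℕ) :
    mk (X 2) ^ n = (mk (X 0) * mk (X 1)) ^ (n / 2) * mk (X 2) ^ (n % 2) := by
  conv_lhs => rw [← Nat.div_add_mod n 2, pow_add, pow_mul, mk_X_two_pow_two]

theorem mk_conicParamInv_conicParam (p : MvPolynomial (Fin 3) k) :
    mk (conicParamInv k (conicParam k p)) = mk p := by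
  induction p using MvPolynomial.induction_on' with
  | monomial e c =>
    have he : conicParam k (monomial e c) =
        C c * X 0 ^ (2 * e 0 + e 2) * X 1 ^ (2 * e 1 + e 2) := by
      rw [monomial_eq_C_mul_X_pow_mul_X_pow_mul_X_pow]
      simp only [map_mul, map_pow, algHom_C, algebraMap_eq, conicParam_X, Matrix.cons_val_zero,
        Matrix.cons_val_one, Matrix.cons_val]
      ring
    rw [he, conicParamInv_C_mul_X_pow_mul_X_pow, monomial_eq_C_mul_X_pow_mul_X_pow_mul_X_pow,
      show (2 * e 0 + e 2) / 2 = e 0 + e 2 / 2 by omega,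
      show (2 * e 1 + e 2) / 2 = e 1 + e 2 / 2 by omega,
      show (2 * e 0 + e 2) % 2 = e 2 % 2 by omega]
    simp only [map_mul, map_pow, mk_X_two_pow (e 2)]
    ring
  | add p q hp hq => simp only [map_add, hp, hq]

theorem ker_conicParam : RingHom.ker (conicParam k) = conicIdeal k := by
  refine le_antisymm (fun p hp => ?_) ?_
  · rw [← Ideal.Quotient.eq_zero_iff_mem, ← mk_conicParamInv_conicParam, RingHom.mem_ker.mp hp,
      map_zero, map_zero]
  · rw [Ideal.span_le, Set.singleton_subset_iff, SetLike.mem_coe, RingHom.mem_ker]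
    simp only [map_sub, map_mul, map_pow, conicParam_X, Matrix.cons_val_zero, Matrix.cons_val_one,
      Matrix.cons_val]
    ring

variable (k) in
def conicEmbedding : ConicRing k →ₐ[k] MvPolynomial (Fin 2) k :=
  Ideal.Quotient.liftₐ _ (conicParam k) fun p hp => by rwa [← ker_conicParam] at hp

@[simp]
theorem conicEmbedding_mk (p : MvPolynomial (Fin 3) k) :
    conicEmbedding k (mk p) = conicParam k p :=
  rfl

theorem conicEmbedding_injective : Function.Injective (conicEmbedding k) :=
  RingHom.lift_injective_of_ker_le_ideal _ _ ker_conicParam.le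

theorem range_conicEmbedding : (conicEmbedding k).range = evenDegreeSubalgebra (Fin 2) k := by
  refine le_antisymm ?_ fun u hu => ⟨mk (conicParamInv k u), conicParam_conicParamInv hu⟩
  rintro _ ⟨r, rfl⟩
  obtain ⟨p, rfl⟩ := Ideal.Quotient.mk_surjective r
  exact conicParam_mem_evenDegreeSubalgebra p

theorem exists_conicEmbedding_eq_of_X_pow_two_mul {a : ConicRing k} {u : MvPolynomial (Fin 2) k}
    (h : conicEmbedding k a = X 1 ^ 2 * u) : ∃ w, conicEmbedding k w = u := by
  have ha : conicEmbedding k a ∈ evenDegreeSubalgebra (Fin 2) k := by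
    rw [← range_conicEmbedding]
    exact ⟨a, rfl⟩
  rw [h] at ha
  rw [← AlgHom.mem_range, range_conicEmbedding]
  exact mem_evenDegreeSubalgebra_of_X_pow_two_mul_mem ha

variable (k) in
abbrev conicEmbeddingAlgebra : Algebra (ConicRing k) (MvPolynomial (Fin 2) k) :=
  (conicEmbedding k).toRingHom.toAlgebra

attribute [local instance] conicEmbeddingAlgebra

theorem conicEmbedding_isScalarTower : IsScalarTower k (ConicRing k) (MvPolynomial (Fin 2) k) :=
  IsScalarTower.of_algebraMap_eq fun a => ((conicEmbedding k).commutes a).symm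

attribute [local instance] conicEmbedding_isScalarTower

variable (k) in
def conicPartial (i : Fin 2) : Ω[ConicRing k⁄k] →ₗ[ConicRing k] MvPolynomial (Fin 2) k :=
  ((pderiv i).compAlgebraMap (ConicRing k)).liftKaehlerDifferential

theorem conicPartial_D (i : Fin 2) (r : ConicRing k) :
    conicPartial k i (D k _ r) = pderiv i (conicEmbedding k r) :=
  Derivation.liftKaehlerDifferential_comp_D _ r

theorem conicPartial_eq_zero_of_smul_eq_zero [IsDomain k] (i : Fin 2) {r : ConicRing k}
    {ω : Ω[ConicRing k⁄k]} (hr : r ≠ 0) (hω : r • ω = 0) : conicPartial k i ω = 0 := by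
  have h := congrArg (conicPartial k i) hω
  rw [map_smul, map_zero, Algebra.smul_def, mul_eq_zero] at h
  exact h.resolve_left ((map_ne_zero_iff _ conicEmbedding_injective).mpr hr)

theorem exists_sum_smul_D_mk_X_eq (ω : Ω[ConicRing k⁄k]) :
    ∃ c : Fin 3 → ConicRing k, ∑ j, c j • D k _ (mk (X j)) = ω := by
  have hspan := span_range_D_X_eq_top_of_surjective (Ideal.Quotient.mkₐ k (conicIdeal k))
    (Ideal.Quotient.mkₐ_surjective k _)
  exact (Submodule.mem_span_range_iff_exists_fun _).mp (hspan ▸ Submodule.mem_top)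

theorem D_conic_relation :
    mk (X 1) • D k (ConicRing k) (mk (X 0)) + mk (X 0) • D k _ (mk (X 1)) +
      (-2 * mk (X 2)) • D k _ (mk (X 2)) = 0 := by
  have h : D k (ConicRing k) (mk (X 0) * mk (X 1) - mk (X 2) ^ 2) = 0 := by
    rw [mk_X_two_pow_two, sub_self, map_zero]
  rw [map_sub, Derivation.leibniz, Derivation.leibniz_pow] at h
  rw [← h]
  module

end Conic

section ConicField

variable {k : Type*} [Field k]

local notation "mk" => Ideal.Quotient.mk (conicIdeal k)

attribute [local instance] conicEmbeddingAlgebra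

theorem eq_zero_of_forall_conicPartial_eq_zero [NeZero (2 : k)] {ω : Ω[ConicRing k⁄k]}
    (h : ∀ i, conicPartial k i ω = 0) : ω = 0 := by
  obtain ⟨c, rfl⟩ := exists_sum_smul_D_mk_X_eq ω
  have h₀ : conicEmbedding k (c 0) * (2 * X 0) + conicEmbedding k (c 2) * X 1 = 0 := by
    simpa [Fin.sum_univ_three, conicPartial_D, Algebra.smul_def, RingHom.algebraMap_toAlgebra]
      using h 0
  have h₁ : conicEmbedding k (c 1) * (2 * X 1) + conicEmbedding k (c 2) * X 0 = 0 := by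
    simpa [Fin.sum_univ_three, conicPartial_D, Algebra.smul_def, RingHom.algebraMap_toAlgebra]
      using h 1
  obtain ⟨u, ha, hb, hc⟩ := exists_eq_X_pow_two_mul_of_mul_X_add_mul_X_eq_zero h₀ h₁
  obtain ⟨w, rfl⟩ := exists_conicEmbedding_eq_of_X_pow_two_mul ha
  have hc₀ : c 0 = mk (X 1) * w := conicEmbedding_injective (by simp [ha])
  have hc₁ : c 1 = mk (X 0) * w := conicEmbedding_injective (by simp [hb])
  have hc₂ : c 2 = -2 * mk (X 2) * w := conicEmbedding_injective (by simp [hc, map_ofNat])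
  calc ∑ j, c j • D k _ (mk (X j))
      = w • (mk (X 1) • D k (ConicRing k) (mk (X 0)) + mk (X 0) • D k _ (mk (X 1)) +
          (-2 * mk (X 2)) • D k _ (mk (X 2))) := by
        simp only [Fin.sum_univ_three, hc₀, hc₁, hc₂]
        module
    _ = 0 := by rw [D_conic_relation, smul_zero]

end ConicField

/-- Let `R = k[x,y,z]/(z² - xy)` over a field `k` of characteristic 0.
Then the module of Kähler differentials `Ω¹_{R/k}` is a torsion-free `R`-module: the only
element annihilated by a nonzero element of `R` is `0`. -/
theorem kaehler_torsionFree_conic (k : Type) [Field k] [CharZero k] :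
    letI I : Ideal (MvPolynomial (Fin 3) k) :=
      Ideal.span {(X 2 : MvPolynomial (Fin 3) k) ^ 2 - X 0 * X 1}
    letI R := MvPolynomial (Fin 3) k ⧸ I
    ∀ (r : R) (m : Ω[R⁄k]), r ≠ 0 → r • m = 0 → m = 0 := by
  intro r m hr hm
  exact eq_zero_of_forall_conicPartial_eq_zero fun i =>
    conicPartial_eq_zero_of_smul_eq_zero i hr hm
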